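/- arXiv:1402.5136 — 2 statements merged into one kernel-verified Lean document; each statement's English description precedes it below -/
import Mathlib

section
/- Every block-balanced identity satisfying property P_{1,2} is a consequence of {σ1, σ2}^δ, where σ1 is x y t1 x t2 y ≈ y x t1 x t2 y and σ2 is x t1 y t2 x y ≈ x t1 y t2 y x. -/
/-- Words over a countably infinite alphabet of variables (identified with ℕ). -/
abbrev Wd := List ℕ

/-- Evaluation of a word in a monoid under an assignment of the variables. -/
def evalWord {M : Type*} [Monoid M] (φ : ℕ → M) (u : Wd) : M := (u.map φ).prod

/-- A monoid `M` satisfies the identity `e = (u, v)`. -/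
def Sat (M : Type*) [Monoid M] (e : Wd × Wd) : Prop :=
  ∀ φ : ℕ → M, evalWord φ e.1 = evalWord φ e.2

/-- The identity `e` is a consequence of the set of identities `Γ`:
every monoid satisfying all identities of `Γ` satisfies `e`. -/
def Consequence (Γ : Set (Wd × Wd)) (e : Wd × Wd) : Prop :=
  ∀ (M : Type) [Monoid M], (∀ f ∈ Γ, Sat M f) → Sat M e

/-- The content of a word: the set of variables occurring in it. -/
def conW (u : Wd) : Set ℕ := {x | x ∈ u}

/-- The set of linear (exactly once occurring) variables of a word. -/
def linW (u : Wd) : Set ℕ := {x | u.count x = 1}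

/-- The set of non-linear (more than once occurring) variables of a word. -/
def nonW (u : Wd) : Set ℕ := {x | 2 ≤ u.count x}

/-- `restrict u X` is the word obtained from `u` by deleting all occurrences of
all variables not in `X`. -/
noncomputable def restrict (u : Wd) (X : Set ℕ) : Wd :=
  u.filter (fun a => @decide (a ∈ X) (Classical.propDecidable _))

/-- The closure of a set of identities under deleting variables. -/
def delta (Γ : Set (Wd × Wd)) : Set (Wd × Wd) :=
  {e | ∃ f ∈ Γ, ∃ X : Set ℕ, e = (restrict f.1 X, restrict f.2 X)}

/-- A word is almost-linear if it has at most one non-linear variable. -/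
def AlmostLinearW (u : Wd) : Prop := ∀ x y, 2 ≤ u.count x → 2 ≤ u.count y → x = y

/-- An identity is almost-linear if both of its sides are almost-linear words. -/
def AlmostLinearId (e : Wd × Wd) : Prop := AlmostLinearW e.1 ∧ AlmostLinearW e.2

/-- An identity is regular if both sides have the same content. -/
def RegularId (e : Wd × Wd) : Prop := conW e.1 = conW e.2

/-- A word `u` is an isoterm for a monoid `M` if the only word `v` with
`M ⊨ u ≈ v` is `u` itself. -/
def Isoterm (M : Type*) [Monoid M] (u : Wd) : Prop := ∀ v : Wd, Sat M (u, v) → v = u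

/-- An identity `u ≈ v` is block-balanced if `u(x, lin u) = v(x, lin u)`
for every variable `x`. -/
def BlockBalanced (e : Wd × Wd) : Prop :=
  ∀ x : ℕ, restrict e.1 ({x} ∪ linW e.1) = restrict e.2 ({x} ∪ linW e.1)

/-- A monoid is finitely based: some finite set of its identities implies all of them. -/
def FinitelyBased (S : Type*) [Monoid S] : Prop :=
  ∃ Γ : Set (Wd × Wd), Γ.Finite ∧ (∀ e ∈ Γ, Sat S e) ∧
    ∀ e : Wd × Wd, Sat S e → Consequence Γ e

/-- Index of the first occurrence of a variable in a word. -/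
def firstIdx (u : Wd) (x : ℕ) : ℕ := u.idxOf x

/-- Index of the last occurrence of a variable in a word. -/
def lastIdx (u : Wd) (x : ℕ) : ℕ := u.length - 1 - u.reverse.idxOf x

/-- σ1 : x y t1 x t2 y ≈ y x t1 x t2 y, with x=0, y=1, t1=2, t2=3. -/
def sigma1 : Wd × Wd := ([0,1,2,0,3,1], [1,0,2,0,3,1])

/-- σμ : x t1 x y t2 y ≈ x t1 y x t2 y, with x=0, y=1, t1=2, t2=3. -/
def sigmaMu : Wd × Wd := ([0,2,0,1,3,1], [0,2,1,0,3,1])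

/-- σ2 : x t1 y t2 x y ≈ x t1 y t2 y x, with x=0, y=1, t1=2, t2=3. -/
def sigma2 : Wd × Wd := ([0,2,1,3,0,1], [0,2,1,3,1,0])

/-- Property P₁,₂: same linear and non-linear variables, and for all variables
`x, y` of the content, the first occurrence of `x` precedes the last occurrence
of `y` on one side iff it does on the other side. -/
def P12 (e : Wd × Wd) : Prop :=
  linW e.1 = linW e.2 ∧ nonW e.1 = nonW e.2 ∧
  ∀ x ∈ conW e.1, ∀ y ∈ conW e.1,
    (firstIdx e.1 x < lastIdx e.1 y ↔ firstIdx e.2 x < lastIdx e.2 y)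

/-!
Tag every letter of a word with its occurrence number. Block balance and `P₁,₂` give `u` and `v`
the same occurrences and force `u` to order every *rigid* pair of occurrences as `v` does: two
occurrences of one letter, an occurrence of a linear letter, or a last occurrence together with a
first one. Now bubble-sort `u` into `v`. An adjacent pair that is out of order is not rigid, so its
letters `a ≠ b` are non-linear and either both occur again to the right, where `σ₁` swaps them, or
both occurred before, where `σ₂` swaps them. A swap changes the order of that pair only, so rigid
pairs stay in order, and it lowers a weighted sum of the positions in `v` of the occurrences of
`u` (`inversionWeight`), so the sort terminates.
-/

open List Relation

section ListLemmas

variable {α : Type*}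

lemma List.exists_eq_append_cons_append_cons {a b : α} {l : List α} (ha : a ∈ l)
    (hb : b ∈ l) (hab : a ≠ b) :
    ∃ m₁ m₂ r, l = m₁ ++ a :: (m₂ ++ b :: r) ∨ l = m₁ ++ b :: (m₂ ++ a :: r) := by
  obtain ⟨m₁, r₁, rfl⟩ := append_of_mem ha
  rcases mem_append.1 hb with hb | hb
  · obtain ⟨m, m₂, rfl⟩ := append_of_mem hb
    exact ⟨m, m₂, r₁, Or.inr (by simp)⟩
  · obtain ⟨m₂, r, rfl⟩ := append_of_mem ((mem_cons.1 hb).resolve_left hab.symm)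
    exact ⟨m₁, m₂, r, Or.inl rfl⟩

lemma List.Nodup.pairwise_idxOf_lt [BEq α] [LawfulBEq α] {l : List α} (hl : l.Nodup) :
    l.Pairwise fun a b => l.idxOf a < l.idxOf b :=
  pairwise_iff_getElem.2 fun i j hi hj hij => by
    rwa [hl.idxOf_getElem, hl.idxOf_getElem]

lemma List.Pairwise.rel_of_idxOf_lt [BEq α] [LawfulBEq α] {R : α → α → Prop} {l : List α}
    (hl : l.Pairwise R) {a b : α} (ha : a ∈ l) (hb : b ∈ l) (h : l.idxOf a < l.idxOf b) :
    R a b := by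
  simpa [getElem_idxOf] using pairwise_iff_getElem.1 hl _ _ (idxOf_lt_length_iff.2 ha)
    (idxOf_lt_length_iff.2 hb) h

lemma List.Pairwise.idxOf_lt_of_not_rel [BEq α] [LawfulBEq α] {R : α → α → Prop}
    {l : List α} (hl : l.Pairwise R) {a b : α} (ha : a ∈ l) (hb : b ∈ l) (hab : a ≠ b)
    (h : ¬ R b a) : l.idxOf a < l.idxOf b := by
  rcases lt_trichotomy (l.idxOf a) (l.idxOf b) with hlt | heq | hgt
  · exact hlt
  · exact absurd ((idxOf_inj ha).1 heq) hab
  · exact absurd (hl.rel_of_idxOf_lt hb ha hgt) h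

lemma List.Pairwise.swap_adjacent {R : α → α → Prop} {A B : List α} {a b : α}
    (hl : (A ++ a :: b :: B).Pairwise R) (hba : R b a) : (A ++ b :: a :: B).Pairwise R := by
  simp only [pairwise_append, pairwise_cons, mem_cons] at hl ⊢
  grind

end ListLemmas

/-- `∑ᵢ (l.length - i) * l[i]`: swapping an adjacent descent `x, y` (`y < x`) lowers it by
`x - y`. -/
def weightedSum : List ℕ → ℕ
  | [] => 0
  | x :: l => (l.length + 1) * x + weightedSum l

lemma weightedSum_swap_lt (A B : List ℕ) {x y : ℕ} (h : y < x) :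
    weightedSum (A ++ y :: x :: B) < weightedSum (A ++ x :: y :: B) := by
  induction A with
  | nil =>
    simp only [nil_append, weightedSum, length_cons]
    nlinarith
  | cons a A ih =>
    simp only [cons_append, weightedSum, length_append, length_cons]
    omega

lemma mem_delta_self {Γ : Set (Wd × Wd)} {f : Wd × Wd} (hf : f ∈ Γ) : f ∈ delta Γ :=
  ⟨f, hf, Set.univ, by simp [restrict]⟩

lemma Sat.sigma1_eq {M : Type*} [Monoid M] (h : Sat M sigma1) (x y t₁ t₂ : M) :
    x * y * t₁ * x * t₂ * y = y * x * t₁ * x * t₂ * y := by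
  simpa [evalWord, sigma1, mul_assoc] using h fun n => [x, y, t₁, t₂].getD n 1

lemma Sat.sigma2_eq {M : Type*} [Monoid M] (h : Sat M sigma2) (x y t₁ t₂ : M) :
    x * t₁ * y * t₂ * x * y = x * t₁ * y * t₂ * y * x := by
  simpa [evalWord, sigma2, mul_assoc] using h fun n => [x, y, t₁, t₂].getD n 1

section Swaps

variable {M : Type*} [Monoid M] (φ : ℕ → M)

lemma evalWord_swap_of_mem_right (h : Sat M sigma1) (p : Wd) {a b : ℕ} {q : Wd} (ha : a ∈ q)
    (hb : b ∈ q) : evalWord φ (p ++ a :: b :: q) = evalWord φ (p ++ b :: a :: q) := by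
  rcases eq_or_ne a b with rfl | hab
  · rfl
  obtain ⟨m₁, m₂, r, rfl | rfl⟩ := List.exists_eq_append_cons_append_cons ha hb hab
  · simpa [evalWord, mul_assoc] using congrArg (evalWord φ p * · * evalWord φ r)
      (h.sigma1_eq (φ a) (φ b) (evalWord φ m₁) (evalWord φ m₂))
  · simpa [evalWord, mul_assoc] using congrArg (evalWord φ p * · * evalWord φ r)
      (h.sigma1_eq (φ b) (φ a) (evalWord φ m₁) (evalWord φ m₂)).symm

lemma evalWord_swap_of_mem_left (h : Sat M sigma2) {a b : ℕ} {p : Wd} (ha : a ∈ p)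
    (hb : b ∈ p) (q : Wd) : evalWord φ (p ++ a :: b :: q) = evalWord φ (p ++ b :: a :: q) := by
  rcases eq_or_ne a b with rfl | hab
  · rfl
  obtain ⟨m₁, m₂, r, rfl | rfl⟩ := List.exists_eq_append_cons_append_cons ha hb hab
  · simpa [evalWord, mul_assoc] using congrArg (evalWord φ m₁ * · * evalWord φ q)
      (h.sigma2_eq (φ a) (φ b) (evalWord φ m₂) (evalWord φ r))
  · simpa [evalWord, mul_assoc] using congrArg (evalWord φ m₁ * · * evalWord φ q)
      (h.sigma2_eq (φ b) (φ a) (evalWord φ m₂) (evalWord φ r)).symm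

end Swaps

def SwapStep (u u' : Wd) : Prop :=
  ∃ p q : Wd, ∃ a b : ℕ, u = p ++ a :: b :: q ∧ u' = p ++ b :: a :: q ∧
    (a ∈ p ∧ b ∈ p ∨ a ∈ q ∧ b ∈ q)

lemma SwapStep.evalWord_eq {M : Type*} [Monoid M] (h₁ : Sat M sigma1) (h₂ : Sat M sigma2)
    {u u' : Wd} (h : SwapStep u u') (φ : ℕ → M) : evalWord φ u = evalWord φ u' := by
  obtain ⟨p, q, a, b, rfl, rfl, ⟨ha, hb⟩ | ⟨ha, hb⟩⟩ := h
  exacts [evalWord_swap_of_mem_left φ h₂ ha hb q, evalWord_swap_of_mem_right φ h₁ p ha hb]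

lemma sat_of_reflTransGen_swapStep {M : Type*} [Monoid M] (h₁ : Sat M sigma1)
    (h₂ : Sat M sigma2) {u v : Wd} (h : ReflTransGen SwapStep u v) : Sat M (u, v) := fun φ => by
  induction h with
  | refl => rfl
  | tail _ hs ih => exact ih.trans (hs.evalWord_eq h₁ h₂ φ)

def occsFrom (c : ℕ → ℕ) : Wd → List (ℕ × ℕ)
  | [] => []
  | x :: w => (x, c x) :: occsFrom (Function.update c x (c x + 1)) w

/-- `(x, i) ∈ occs w` stands for the `i`-th occurrence of `x` in `w`, counting from `0`. -/
def occs (w : Wd) : List (ℕ × ℕ) := occsFrom 0 w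

section Occurrences

lemma map_fst_occsFrom (c : ℕ → ℕ) (w : Wd) : (occsFrom c w).map Prod.fst = w := by
  induction w generalizing c with
  | nil => rfl
  | cons x w ih => simp [occsFrom, ih]

@[simp]
lemma length_occs (w : Wd) : (occs w).length = w.length := by
  simpa [occs] using congrArg length (map_fst_occsFrom 0 w)

lemma mem_occsFrom {c : ℕ → ℕ} {x i : ℕ} {w : Wd} :
    (x, i) ∈ occsFrom c w ↔ c x ≤ i ∧ i < c x + w.count x := by
  induction w generalizing c with
  | nil => simp [occsFrom]
  | cons y w ih =>
    rcases eq_or_ne x y with rfl | hxy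
    · simp only [occsFrom, mem_cons, Prod.mk.injEq, true_and, ih, Function.update_self,
        Order.add_one_le_iff, count_cons_self]
      omega
    · simp [occsFrom, ih, hxy, hxy.symm]

lemma mem_occs {x i : ℕ} {w : Wd} : (x, i) ∈ occs w ↔ i < w.count x := by
  simp [occs, mem_occsFrom]

lemma occsFrom_append (c : ℕ → ℕ) (u w : Wd) :
    occsFrom c (u ++ w) = occsFrom c u ++ occsFrom (fun x => c x + u.count x) w := by
  induction u generalizing c with
  | nil => simp [occsFrom]
  | cons y u ih =>
    simp only [cons_append, occsFrom, ih]
    congr 3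
    funext x
    rcases eq_or_ne x y with rfl | hxy
    · simp only [Function.update_self, count_cons_self]
      omega
    · simp [hxy, hxy.symm]

lemma mem_of_mem_occs {w : Wd} {x i : ℕ} (h : (x, i) ∈ occs w) : x ∈ w :=
  count_pos_iff.1 (Nat.zero_lt_of_lt (mem_occs.1 h))

lemma occs_append (u w : Wd) : occs (u ++ w) = occs u ++ occsFrom (fun x => u.count x) w := by
  simp [occs, occsFrom_append]

lemma pairwise_occsFrom (c : ℕ → ℕ) (w : Wd) :
    (occsFrom c w).Pairwise fun s t => s.1 = t.1 → s.2 < t.2 := by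
  induction w generalizing c with
  | nil => exact .nil
  | cons x w ih =>
    refine .cons ?_ (ih _)
    rintro ⟨y, i⟩ hmem rfl
    simpa using (mem_occsFrom.1 hmem).1

lemma nodup_occs (w : Wd) : (occs w).Nodup :=
  (pairwise_occsFrom 0 w).imp fun h heq => (h (congrArg _ heq)).ne (congrArg _ heq)

lemma idxOf_occs_lt_of_sublist {w : Wd} {s t : ℕ × ℕ} (h : [s, t] <+ occs w) :
    (occs w).idxOf s < (occs w).idxOf t :=
  pairwise_iff_forall_sublist.1 (nodup_occs w).pairwise_idxOf_lt h

lemma occsFrom_filter (P : ℕ → Bool) {c c' : ℕ → ℕ} (hc : ∀ x, P x → c x = c' x) (w : Wd) :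
    occsFrom c (w.filter P) = (occsFrom c' w).filter fun s => P s.1 := by
  induction w generalizing c c' with
  | nil => rfl
  | cons y w ih =>
    by_cases hy : P y
    · simp only [filter_cons, hy, if_true, occsFrom, hc y hy]
      congr 1
      refine ih fun x hx => ?_
      rcases eq_or_ne x y with rfl | hxy <;> simp [*]
    · simp only [filter_cons, hy, occsFrom]
      refine ih fun x hx => ?_
      rw [Function.update_of_ne (by rintro rfl; exact hy hx), hc x hx]

lemma occs_restrict (w : Wd) (X : Set ℕ) :
    occs (restrict w X) =
      (occs w).filter fun s => @decide (s.1 ∈ X) (Classical.propDecidable _) :=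
  occsFrom_filter _ (fun _ _ => rfl) w

lemma idxOf_occsFrom (c : ℕ → ℕ) (w : Wd) (x : ℕ) :
    (occsFrom c w).idxOf (x, c x) = w.idxOf x := by
  induction w generalizing c with
  | nil => rfl
  | cons y w ih =>
    rcases eq_or_ne x y with rfl | hxy
    · simp [occsFrom]
    · rw [occsFrom, idxOf_cons_ne _ (by simp [hxy.symm]), idxOf_cons_ne _ hxy.symm,
        ← ih (Function.update c y (c y + 1)), Function.update_of_ne hxy]

lemma idxOf_occs_zero (w : Wd) (x : ℕ) : (occs w).idxOf (x, 0) = firstIdx w x :=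
  idxOf_occsFrom 0 w x

lemma idxOf_occs_count_sub_one {w : Wd} {x : ℕ} (hx : x ∈ w) :
    (occs w).idxOf (x, w.count x - 1) = lastIdx w x := by
  obtain ⟨r, p, hw, hr⟩ := eq_append_cons_of_mem (mem_reverse.2 hx)
  obtain rfl : w = p.reverse ++ x :: r.reverse := by simpa using congrArg reverse hw
  have hcount : (p.reverse ++ x :: r.reverse).count x = p.reverse.count x + 1 := by
    simp [count_append, count_eq_zero.2 hr]
  have hnot : (x, p.reverse.count x) ∉ occs p.reverse := by simp [mem_occs]
  rw [hcount, Nat.add_sub_cancel, occs_append, idxOf_append_of_notMem hnot, occsFrom,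
    lastIdx, hw, idxOf_append_of_notMem hr]
  simp

lemma occs_swap (p q : Wd) {a b : ℕ} (hab : a ≠ b) : ∃ T,
    occs (p ++ a :: b :: q) = occs p ++ (a, p.count a) :: (b, p.count b) :: T ∧
    occs (p ++ b :: a :: q) = occs p ++ (b, p.count b) :: (a, p.count a) :: T := by
  refine ⟨occsFrom (Function.update (Function.update (p.count ·) a (p.count a + 1)) b
    (p.count b + 1)) q, ?_, ?_⟩ <;> simp only [occs_append, occsFrom]
  · rw [Function.update_of_ne hab.symm]
  · rw [Function.update_of_ne hab, Function.update_comm hab.symm]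

lemma exists_swap_of_occs_eq {u : Wd} {A B : List (ℕ × ℕ)} {a b i j : ℕ}
    (hu : occs u = A ++ (a, i) :: (b, j) :: B) (hab : a ≠ b) :
    ∃ p q : Wd, u = p ++ a :: b :: q ∧ i = p.count a ∧ j = p.count b ∧
      occs (p ++ b :: a :: q) = A ++ (b, j) :: (a, i) :: B := by
  have hu' : u = A.map Prod.fst ++ a :: b :: B.map Prod.fst := by
    simpa [occs, map_fst_occsFrom] using congrArg (map Prod.fst) hu
  obtain ⟨T, h₁, h₂⟩ := occs_swap (A.map Prod.fst) (B.map Prod.fst) hab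
  rw [← hu', hu] at h₁
  obtain ⟨hA, hT⟩ := append_inj h₁.symm (by simp)
  simp only [cons.injEq, Prod.mk.injEq, true_and] at hT
  obtain ⟨rfl, rfl, rfl⟩ := hT
  exact ⟨_, _, hu', rfl, rfl, by rw [h₂, hA]⟩

end Occurrences

section Compatible

variable (v : Wd)

def rank (s : ℕ × ℕ) : ℕ := (occs v).idxOf s

def IsRigidPair (s t : ℕ × ℕ) : Prop :=
  s.1 = t.1 ∨ v.count s.1 = 1 ∨ v.count t.1 = 1 ∨
    (s.2 + 1 = v.count s.1 ∧ t.2 = 0) ∨ (s.2 = 0 ∧ t.2 + 1 = v.count t.1)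

structure Compatible (u : Wd) : Prop where
  count_eq : ∀ x, u.count x = v.count x
  pairwise_rigid : (occs u).Pairwise fun s t => IsRigidPair v s t → rank v s < rank v t

def inversionWeight (u : Wd) : ℕ := weightedSum ((occs u).map (rank v))

variable {v}

lemma mem_and_mem_of_not_isRigidPair {p q : Wd} {a b : ℕ}
    (hcount : ∀ x, (p ++ a :: b :: q).count x = v.count x)
    (h : ¬ IsRigidPair v (a, p.count a) (b, p.count b)) : a ∈ p ∧ b ∈ p ∨ a ∈ q ∧ b ∈ q := by
  simp only [IsRigidPair, not_or, not_and] at h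
  obtain ⟨hab, ha₁, hb₁, hlf, hfl⟩ := h
  have ha := hcount a
  have hb := hcount b
  simp only [count_append, count_cons_self, ne_eq, Ne.symm hab, not_false_eq_true,
    count_cons_of_ne, hab] at ha hb
  simp only [← count_pos_iff]
  omega

lemma Compatible.eq_of_isChain {u : Wd} (hc : Compatible v u)
    (h : (occs u).IsChain fun s t => rank v s ≤ rank v t) : u = v := by
  have hperm : occs u ~ occs v := (perm_ext_iff_of_nodup (nodup_occs u) (nodup_occs v)).2
    fun ⟨x, i⟩ => by simp [mem_occs, hc.count_eq]
  have : Trans (fun s t => rank v s ≤ rank v t) (fun s t => rank v s ≤ rank v t)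
      (fun s t => rank v s ≤ rank v t) := ⟨le_trans⟩
  have hoccs : occs u = occs v :=
    hperm.eq_of_pairwise (fun _ _ hs _ h₁ h₂ => (idxOf_inj (hperm.subset hs)).1 (h₁.antisymm h₂))
      (isChain_iff_pairwise.1 h) ((nodup_occs v).pairwise_idxOf_lt.imp le_of_lt)
  simpa [occs, map_fst_occsFrom] using congrArg (map Prod.fst) hoccs

theorem Compatible.exists_swapStep {u : Wd} (hc : Compatible v u) (hne : u ≠ v) :
    ∃ u', SwapStep u u' ∧ Compatible v u' ∧ inversionWeight v u' < inversionWeight v u := by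
  obtain ⟨A, s, t, B, hu, hts⟩ : ∃ A s t B, occs u = A ++ s :: t :: B ∧ rank v t < rank v s := by
    by_contra! h
    exact hne (hc.eq_of_isChain (isChain_iff_forall_rel_of_append_cons_cons.2
      fun s t A B hu => h A s t B hu))
  have hpw := hu ▸ hc.pairwise_rigid
  have hst : ¬ IsRigidPair v s t := fun hr =>
    ((pairwise_cons.1 (pairwise_append.1 hpw).2.1).1 t mem_cons_self hr).not_gt hts
  obtain ⟨a, i⟩ := s
  obtain ⟨b, j⟩ := t
  obtain ⟨p, q, rfl, rfl, rfl, hu'⟩ := exists_swap_of_occs_eq hu fun h => hst (Or.inl h)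
  refine ⟨p ++ b :: a :: q, ⟨p, q, a, b, rfl, rfl, mem_and_mem_of_not_isRigidPair hc.count_eq hst⟩,
    ⟨fun x => ?_, ?_⟩, ?_⟩
  · rw [← hc.count_eq x]
    exact ((Perm.swap a b q).append_left p).count_eq x
  · rw [hu']
    exact hpw.swap_adjacent fun _ => hts
  · simpa [inversionWeight, hu, hu'] using weightedSum_swap_lt _ _ hts

theorem Compatible.reflTransGen_swapStep {u : Wd} (hc : Compatible v u) :
    ReflTransGen SwapStep u v := by
  by_cases huv : u = v
  · exact huv ▸ .refl
  · obtain ⟨u', hstep, hc', _⟩ := hc.exists_swapStep huv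
    exact .head hstep hc'.reflTransGen_swapStep
termination_by inversionWeight v u

end Compatible

section Hypotheses

variable {u v : Wd}

lemma count_restrict_of_mem (w : Wd) {X : Set ℕ} {x : ℕ} (hx : x ∈ X) :
    (restrict w X).count x = w.count x :=
  count_filter (by simpa using hx)

lemma count_eq_of_blockBalanced (hbb : BlockBalanced (u, v)) (x : ℕ) :
    u.count x = v.count x := by
  have hx : x ∈ ({x} ∪ linW u : Set ℕ) := Or.inl rfl
  rw [← count_restrict_of_mem u hx, hbb x, count_restrict_of_mem v hx]

lemma rank_lt_of_restrict_eq {X : Set ℕ} (hX : restrict u X = restrict v X) {s t : ℕ × ℕ}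
    (hs : s.1 ∈ X) (ht : t.1 ∈ X) (h : [s, t] <+ occs u) : rank v s < rank v t := by
  have hsub : [s, t] <+ occs (restrict u X) := by
    rw [occs_restrict]
    simpa [hs, ht] using h.filter fun s => @decide (s.1 ∈ X) (Classical.propDecidable _)
  rw [hX, occs_restrict] at hsub
  exact idxOf_occs_lt_of_sublist (hsub.trans filter_sublist)

theorem compatible_of_blockBalanced_of_P12 (hbb : BlockBalanced (u, v)) (hp : P12 (u, v)) :
    Compatible v u := by
  have hcount := count_eq_of_blockBalanced hbb
  have hp₃ : ∀ x ∈ u, ∀ y ∈ u, (firstIdx u x < lastIdx u y ↔ firstIdx v x < lastIdx v y) :=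
    hp.2.2
  refine ⟨hcount, pairwise_iff_forall_sublist.2 ?_⟩
  rintro ⟨x, i⟩ ⟨y, j⟩ hsub hrig
  have hu := idxOf_occs_lt_of_sublist hsub
  have hxu : (x, i) ∈ occs u := hsub.subset (by simp)
  have hyu : (y, j) ∈ occs u := hsub.subset (by simp)
  have hxv : (x, i) ∈ occs v := mem_occs.2 (hcount x ▸ mem_occs.1 hxu)
  have hyv : (y, j) ∈ occs v := mem_occs.2 (hcount y ▸ mem_occs.1 hyu)
  rcases eq_or_ne x y with rfl | hxy
  · have hij : i < j := pairwise_iff_forall_sublist.1 (pairwise_occsFrom 0 u) hsub rfl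
    exact (pairwise_occsFrom 0 v).idxOf_lt_of_not_rel hxv hyv (by simp [hij.ne])
      fun h => (h rfl).not_gt hij
  have hne : rank v (x, i) ≠ rank v (y, j) := fun h =>
    hxy (congrArg Prod.fst ((idxOf_inj hxv).1 h))
  rcases hrig with h | h | h | ⟨hi, rfl⟩ | ⟨rfl, hj⟩
  · exact absurd h hxy
  · exact rank_lt_of_restrict_eq (hbb y) (Or.inr (by simpa [linW, hcount] using h)) (Or.inl rfl)
      hsub
  · exact rank_lt_of_restrict_eq (hbb x) (Or.inl rfl) (Or.inr (by simpa [linW, hcount] using h))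
      hsub
  · obtain rfl : i = v.count x - 1 := by simp only at hi; omega
    rw [← hcount x, idxOf_occs_count_sub_one (mem_of_mem_occs hxu), idxOf_occs_zero] at hu
    have := (hp₃ y (mem_of_mem_occs hyu) x (mem_of_mem_occs hxu)).not.1 (by omega)
    simp only [rank, idxOf_occs_count_sub_one (mem_of_mem_occs hxv), idxOf_occs_zero] at hne ⊢
    omega
  · obtain rfl : j = v.count y - 1 := by simp only at hj; omega
    rw [← hcount y, idxOf_occs_count_sub_one (mem_of_mem_occs hyu), idxOf_occs_zero] at hu
    simpa [rank, idxOf_occs_count_sub_one (mem_of_mem_occs hyv), idxOf_occs_zero] using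
      (hp₃ x (mem_of_mem_occs hxu) y (mem_of_mem_occs hyu)).1 hu

end Hypotheses

theorem stmt7 (e : Wd × Wd) (hbb : BlockBalanced e) (hp : P12 e) :
    Consequence (delta {sigma1, sigma2}) e := by
  obtain ⟨u, v⟩ := e
  intro M _ hM
  exact sat_of_reflTransGen_swapStep (hM _ (mem_delta_self (by simp)))
    (hM _ (mem_delta_self (by simp)))
    (compatible_of_blockBalanced_of_P12 hbb hp).reflTransGen_swapStep
end

section
/- An identity belongs to J_2, i.e., its two sides have the same set of scattered subwords of length at most 2, if and only if it is a consequence of {σ1, σ2, x t1 x t2 x ≈ x t1 t2 x}^δ, where σ1 is x y t1 x t2 y ≈ y x t1 x t2 y and σ2 is x t1 y t2 x y ≈ x t1 y t2 y x. -/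
/-- `Jm m`: the set of identities whose two sides have the same set of
scattered subwords (sublists) of length at most `m`. -/
def Jm (m : ℕ) : Set (Wd × Wd) :=
  {e | ∀ p : Wd, p.length ≤ m → (p.Sublist e.1 ↔ p.Sublist e.2)}

/-- x t1 x t2 x ≈ x t1 t2 x, with x=0, t1=2, t2=3. -/
def xtxtx : Wd × Wd := ([0,2,0,3,0], [0,2,3,0])

open scoped List

section Evaluation

variable {M : Type*} [Monoid M] (φ : ℕ → M)

@[simp] theorem evalWord_nil : evalWord φ [] = 1 := rfl

@[simp] theorem evalWord_cons (a : ℕ) (u : Wd) : evalWord φ (a :: u) = φ a * evalWord φ u := by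
  simp [evalWord]

@[simp] theorem evalWord_append (u v : Wd) :
    evalWord φ (u ++ v) = evalWord φ u * evalWord φ v := by
  simp [evalWord]

theorem evalWord_flatMap (s : ℕ → Wd) (u : Wd) :
    evalWord φ (u.flatMap s) = evalWord (fun a => evalWord φ (s a)) u := by
  induction u with
  | nil => rfl
  | cons a u ih => simp [ih]

open Classical in
theorem evalWord_restrict (u : Wd) (X : Set ℕ) :
    evalWord φ (restrict u X) = evalWord (fun a => if a ∈ X then φ a else 1) u := by
  induction u with
  | nil => rfl
  | cons a u ih =>
    by_cases ha : a ∈ X <;> simp_all [restrict]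

end Evaluation

theorem restrict_univ (u : Wd) : restrict u Set.univ = u := by
  simp [restrict]

theorem Sat.restrict {M : Type*} [Monoid M] {e : Wd × Wd} (h : Sat M e) (X : Set ℕ) :
    Sat M (restrict e.1 X, restrict e.2 X) := by
  classical
  intro φ
  simpa only [evalWord_restrict] using h _

theorem sat_delta_iff {M : Type*} [Monoid M] {Γ : Set (Wd × Wd)} :
    (∀ f ∈ delta Γ, Sat M f) ↔ ∀ f ∈ Γ, Sat M f := by
  constructor
  · intro h f hf
    simpa [restrict_univ] using h _ ⟨f, hf, Set.univ, rfl⟩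
  · rintro h _ ⟨f, hf, X, rfl⟩
    exact (h f hf).restrict X

theorem consequence_delta_iff {Γ : Set (Wd × Wd)} {e : Wd × Wd} :
    Consequence (delta Γ) e ↔ Consequence Γ e := by
  simp only [Consequence, sat_delta_iff]

def ElementaryStep (Γ : Set (Wd × Wd)) (u v : Wd) : Prop :=
  ∃ f ∈ Γ, ∃ (s : ℕ → Wd) (p q : Wd),
    u = p ++ f.1.flatMap s ++ q ∧ v = p ++ f.2.flatMap s ++ q

def Derivable (Γ : Set (Wd × Wd)) : Wd → Wd → Prop := Relation.EqvGen (ElementaryStep Γ)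

namespace Derivable

variable {Γ : Set (Wd × Wd)} {u v w : Wd}

@[refl] theorem refl (u : Wd) : Derivable Γ u u := Relation.EqvGen.refl u

theorem symm (h : Derivable Γ u v) : Derivable Γ v u := Relation.EqvGen.symm _ _ h

theorem trans (h₁ : Derivable Γ u v) (h₂ : Derivable Γ v w) : Derivable Γ u w :=
  Relation.EqvGen.trans _ _ _ h₁ h₂

theorem of_mem {f : Wd × Wd} (hf : f ∈ Γ) (s : ℕ → Wd) (p q : Wd) :
    Derivable Γ (p ++ f.1.flatMap s ++ q) (p ++ f.2.flatMap s ++ q) :=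
  .rel _ _ ⟨f, hf, s, p, q, rfl, rfl⟩

theorem consequence (h : Derivable Γ u v) : Consequence Γ (u, v) := by
  intro M _ hM φ
  induction h with
  | rel _ _ hstep =>
    obtain ⟨f, hf, s, p, q, rfl, rfl⟩ := hstep
    simp only [evalWord_append, evalWord_flatMap, hM f hf _]
  | refl => rfl
  | symm _ _ _ ih => exact ih.symm
  | trans _ _ _ _ _ ih₁ ih₂ => exact ih₁.trans ih₂

end Derivable

section Sublist

variable {α : Type*} {a b c : α} {l s t : List α}

theorem pair_sublist_cons_iff {u : List α} :
    [a, b] <+ c :: u ↔ (a = c ∧ b ∈ u) ∨ [a, b] <+ u := by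
  rw [List.sublist_cons_iff]
  aesop

theorem exists_eq_append_cons_of_cons_sublist (h : a :: l <+ t) :
    ∃ s r, t = s ++ a :: r ∧ l <+ r := by
  obtain ⟨r₁, r₂, rfl, ha, hl⟩ := List.cons_sublist_iff.1 h
  obtain ⟨s, r, rfl⟩ := List.append_of_mem ha
  exact ⟨s, r ++ r₂, by simp, hl.trans (List.sublist_append_right r r₂)⟩

theorem exists_eq_of_pair_sublist (h : [a, b] <+ l) :
    ∃ s t r, l = s ++ a :: (t ++ b :: r) := by
  obtain ⟨s, r', rfl, hb⟩ := exists_eq_append_cons_of_cons_sublist h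
  obtain ⟨t, r, rfl⟩ := List.append_of_mem (List.singleton_sublist.1 hb)
  exact ⟨s, t, r, rfl⟩

theorem pair_sublist_append_cons (hb : b ∈ t) : [a, b] <+ s ++ a :: t :=
  (List.cons_sublist_cons.2 (List.singleton_sublist.2 hb)).trans (List.sublist_append_right s _)

theorem cons_sublist_of_cons_sublist_append (h : a :: l <+ s ++ t) (ha : a ∉ s) :
    a :: l <+ t := by
  obtain ⟨_ | ⟨x, l₁⟩, l₂, hl, h₁, h₂⟩ := List.sublist_append_iff.1 h
  · simpa [hl] using h₂
  · obtain ⟨rfl, -⟩ := List.cons_eq_cons.1 (List.cons_append ▸ hl)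
    exact absurd (h₁.subset List.mem_cons_self) ha

theorem mem_or_mem_of_pair_sublist_append_cons (h : [a, b] <+ s ++ c :: t) :
    a ∈ s ∨ b ∈ t := by
  by_cases ha : a ∈ s
  · exact Or.inl ha
  · exact Or.inr (List.singleton_sublist.1 (cons_sublist_of_cons_sublist_append h ha).tail)

theorem pair_sublist_or_pair_sublist_of_mem (hab : a ≠ b) (ha : a ∈ l) (hb : b ∈ l) :
    [a, b] <+ l ∨ [b, a] <+ l := by
  induction l with
  | nil => simp at ha
  | cons c l ih =>
    simp only [pair_sublist_cons_iff]
    rcases List.mem_cons.1 ha with rfl | ha' <;> rcases List.mem_cons.1 hb with rfl | hb'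
    · exact absurd rfl hab
    · exact Or.inl (Or.inl ⟨rfl, hb'⟩)
    · exact Or.inr (Or.inl ⟨rfl, ha'⟩)
    · exact (ih ha' hb').imp Or.inr Or.inr

end Sublist

@[ext] structure SubwordProfile (α : Type*) where
  letters : Set α
  pairs : Set (α × α)

namespace SubwordProfile

variable {α : Type*}

instance : One (SubwordProfile α) := ⟨⟨∅, ∅⟩⟩

instance : Mul (SubwordProfile α) :=
  ⟨fun a b => ⟨a.letters ∪ b.letters, a.pairs ∪ b.pairs ∪ a.letters ×ˢ b.letters⟩⟩

@[simp] theorem letters_mul (a b : SubwordProfile α) :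
    (a * b).letters = a.letters ∪ b.letters := rfl

@[simp] theorem pairs_mul (a b : SubwordProfile α) :
    (a * b).pairs = a.pairs ∪ b.pairs ∪ a.letters ×ˢ b.letters := rfl

@[simp] theorem letters_one : (1 : SubwordProfile α).letters = ∅ := rfl

@[simp] theorem pairs_one : (1 : SubwordProfile α).pairs = ∅ := rfl

instance : Monoid (SubwordProfile α) where
  mul_assoc a b c := by
    ext x
    · simp only [letters_mul, Set.mem_union, or_assoc]
    · simp only [pairs_mul, letters_mul, Set.mem_union, Set.mem_prod]; tauto
  one_mul a := by ext <;> simp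
  mul_one a := by ext <;> simp

end SubwordProfile

open SubwordProfile

section Profile

variable {α : Type*}

def profile (u : List α) : SubwordProfile α := ⟨{a | a ∈ u}, {p | [p.1, p.2] <+ u}⟩

theorem profile_eq_iff {u v : List α} :
    profile u = profile v ↔ (∀ a, a ∈ u ↔ a ∈ v) ∧ ∀ a b, [a, b] <+ u ↔ [a, b] <+ v := by
  simp [profile, SubwordProfile.ext_iff, Set.ext_iff]

theorem profile_cons (a : α) (u : List α) : profile (a :: u) = profile [a] * profile u := by
  ext p
  · simp [profile]
  · simp [profile, pair_sublist_cons_iff, or_comm]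

theorem profile_eq_evalWord (u : Wd) : profile u = evalWord (fun a => profile [a]) u := by
  induction u with
  | nil => ext <;> simp [profile]
  | cons a u ih => rw [profile_cons, ih, evalWord_cons]

theorem mem_Jm_two_iff {e : Wd × Wd} : e ∈ Jm 2 ↔ profile e.1 = profile e.2 := by
  rw [profile_eq_iff]
  refine ⟨fun h => ⟨fun a => by simpa using h [a], fun a b => h [a, b] le_rfl⟩, ?_⟩
  rintro ⟨h₁, h₂⟩ (_ | ⟨a, _ | ⟨b, _ | _⟩⟩) hp
  · simp
  · simpa using h₁ a
  · exact h₂ a b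
  · simp at hp

end Profile

section EvalProfile

variable {β : Type*} (φ : ℕ → SubwordProfile β)

theorem letters_evalWord (u : Wd) (x : β) :
    x ∈ (evalWord φ u).letters ↔ ∃ a ∈ u, x ∈ (φ a).letters := by
  induction u with
  | nil => simp
  | cons a u ih => simp [ih]

theorem pairs_evalWord (u : Wd) (x : β × β) :
    x ∈ (evalWord φ u).pairs ↔ (∃ a ∈ u, x ∈ (φ a).pairs) ∨
      ∃ a b, [a, b] <+ u ∧ x.1 ∈ (φ a).letters ∧ x.2 ∈ (φ b).letters := by
  induction u with
  | nil => simp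
  | cons a u ih =>
    simp only [evalWord_cons, pairs_mul, Set.mem_union, Set.mem_prod, ih, letters_evalWord,
      List.mem_cons, pair_sublist_cons_iff]
    aesop

end EvalProfile

theorem sat_profile_of_mem_Jm_two {β : Type*} {e : Wd × Wd} (he : e ∈ Jm 2) :
    Sat (SubwordProfile β) e := by
  obtain ⟨hmem, hpair⟩ := profile_eq_iff.1 (mem_Jm_two_iff.1 he)
  intro φ
  ext x
  · simp only [letters_evalWord, hmem]
  · simp only [pairs_evalWord, hmem, hpair]

theorem mem_Jm_two_of_consequence {Γ : Set (Wd × Wd)} {e : Wd × Wd} (hΓ : Γ ⊆ Jm 2)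
    (h : Consequence Γ e) : e ∈ Jm 2 := by
  have := h (SubwordProfile ℕ) (fun f hf => sat_profile_of_mem_Jm_two (hΓ hf))
    (fun a => profile [a])
  rwa [← profile_eq_evalWord, ← profile_eq_evalWord, ← mem_Jm_two_iff] at this

theorem mem_Jm_iff_forall_sublists {m : ℕ} {u v : Wd} :
    (u, v) ∈ Jm m ↔ (∀ p ∈ u.sublists, p.length ≤ m → p <+ v) ∧
      ∀ p ∈ v.sublists, p.length ≤ m → p <+ u := by
  simp only [Jm, Set.mem_ofPred_eq, List.mem_sublists]
  exact ⟨fun h => ⟨fun p hp hm => (h p hm).1 hp, fun p hp hm => (h p hm).2 hp⟩,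
    fun h p hm => ⟨fun hp => h.1 p hp hm, fun hp => h.2 p hp hm⟩⟩

def basisJ2 : Set (Wd × Wd) := {sigma1, sigma2, xtxtx}

theorem basisJ2_subset_Jm_two : basisJ2 ⊆ Jm 2 := by
  rintro f (rfl | rfl | rfl) <;> exact mem_Jm_iff_forall_sublists.2 (by decide)

section AtMostTwice

variable {α : Type*} [DecidableEq α]

def AtMostTwice (u : List α) : Prop := ∀ x, u.count x ≤ 2

theorem AtMostTwice.of_perm {u v : List α} (hu : AtMostTwice u) (h : u.Perm v) : AtMostTwice v :=
  fun x => h.count_eq x ▸ hu x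

theorem count_eq_of_profile_eq {u v : List α} (hu : AtMostTwice u) (hv : AtMostTwice v)
    (h : profile u = profile v) (x : α) : u.count x = v.count x := by
  obtain ⟨hmem, hpair⟩ := profile_eq_iff.1 h
  have h₁ : 0 < u.count x ↔ 0 < v.count x := by simpa only [List.count_pos_iff] using hmem x
  have h₂ : 2 ≤ u.count x ↔ 2 ≤ v.count x := by
    rw [← List.replicate_sublist_iff, ← List.replicate_sublist_iff]
    exact hpair x x
  have := hu x
  have := hv x
  omega

theorem mem_suffix_or_mem_prefix_of_profile_eq {w p q v : List α} {z y : α} (hzy : z ≠ y)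
    (hyp : y ∉ p) (hu : AtMostTwice (w ++ p ++ z :: y :: q)) (hv : AtMostTwice (w ++ y :: v))
    (h : profile (w ++ p ++ z :: y :: q) = profile (w ++ y :: v)) :
    (z ∈ q ∧ y ∈ q) ∨ (z ∈ w ++ p ∧ y ∈ w ++ p) := by
  have hcy := count_eq_of_profile_eq hu hv h y
  have hcz := count_eq_of_profile_eq hu hv h z
  have hy₂ := hv y
  have hz₂ := hu z
  have hpair := (profile_eq_iff.1 h).2
  simp only [List.count_append, List.count_cons, List.count_eq_zero.2 hyp, hzy, hzy.symm,
    beq_iff_eq, if_true, if_false] at hcy hcz hy₂ hz₂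
  have hzv : z ∈ v := List.count_pos_iff.1 (by omega)
  have hzw_or_yv : z ∈ w ∨ y ∈ v :=
    mem_or_mem_of_pair_sublist_append_cons ((hpair z y).1 (pair_sublist_append_cons (by simp)))
  have hyw_or_zq : y ∈ w ++ p ++ [z] ∨ z ∈ q :=
    mem_or_mem_of_pair_sublist_append_cons
      (by simpa using (hpair y z).2 (pair_sublist_append_cons hzv))
  -- A third occurrence of `y` or `z` would be needed in every other configuration.
  simp only [← List.count_pos_iff, List.count_append, List.count_cons, List.count_nil,
    List.count_eq_zero.2 hyp, hzy, beq_iff_eq, if_false] at hzw_or_yv hyw_or_zq ⊢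
  omega

end AtMostTwice

section DerivedRules

variable {Γ : Set (Wd × Wd)}

theorem derivable_xtxtx (h : xtxtx ∈ Γ) (x : ℕ) (p s t q : Wd) :
    Derivable Γ (p ++ x :: (s ++ x :: (t ++ x :: q))) (p ++ x :: (s ++ t ++ x :: q)) := by
  simpa [xtxtx] using Derivable.of_mem h (fun n => [[x], [], s, t].getD n []) p q

theorem derivable_swap_of_mem_right (h : sigma1 ∈ Γ) {z y : ℕ} (hzy : z ≠ y) {P Q : Wd}
    (hz : z ∈ Q) (hy : y ∈ Q) : Derivable Γ (P ++ z :: y :: Q) (P ++ y :: z :: Q) := by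
  wlog hQ : [z, y] <+ Q generalizing z y
  · exact (this hzy.symm hy hz
      ((pair_sublist_or_pair_sublist_of_mem hzy hz hy).resolve_left hQ)).symm
  obtain ⟨s, t, r, rfl⟩ := exists_eq_of_pair_sublist hQ
  simpa [sigma1] using Derivable.of_mem h (fun n => [[z], [y], s, t].getD n []) P r

theorem derivable_swap_of_mem_left (h : sigma2 ∈ Γ) {z y : ℕ} (hzy : z ≠ y) {P Q : Wd}
    (hz : z ∈ P) (hy : y ∈ P) : Derivable Γ (P ++ z :: y :: Q) (P ++ y :: z :: Q) := by
  wlog hP : [z, y] <+ P generalizing z y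
  · exact (this hzy.symm hy hz
      ((pair_sublist_or_pair_sublist_of_mem hzy hz hy).resolve_left hP)).symm
  obtain ⟨s, t, r, rfl⟩ := exists_eq_of_pair_sublist hP
  simpa [sigma2] using Derivable.of_mem h (fun n => [[z], [y], t, r].getD n []) s Q

theorem exists_derivable_atMostTwice (h : xtxtx ∈ Γ) (u : Wd) :
    ∃ u', Derivable Γ u u' ∧ AtMostTwice u' := by
  by_cases hu : AtMostTwice u
  · exact ⟨u, .refl u, hu⟩
  obtain ⟨x, hx⟩ : ∃ x, 2 < u.count x := by simpa [AtMostTwice] using hu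
  obtain ⟨p, r, rfl, hr⟩ :=
    exists_eq_append_cons_of_cons_sublist (List.replicate_sublist_iff (n := 3).2 hx)
  obtain ⟨s, t, q, rfl⟩ := exists_eq_of_pair_sublist hr
  obtain ⟨u', hu', h'⟩ := exists_derivable_atMostTwice h (p ++ x :: (s ++ t ++ x :: q))
  exact ⟨u', (derivable_xtxtx h x p s t q).trans hu', h'⟩
termination_by u.length
decreasing_by subst_vars; simp

end DerivedRules

theorem profile_eq_of_derivable {u v : Wd} (h : Derivable basisJ2 u v) : profile u = profile v :=
  mem_Jm_two_iff.1 (mem_Jm_two_of_consequence basisJ2_subset_Jm_two h.consequence)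

theorem derivable_move_to_front {w p q v : Wd} {y : ℕ} (hyp : y ∉ p)
    (hu : AtMostTwice (w ++ p ++ y :: q)) (hv : AtMostTwice (w ++ y :: v))
    (h : profile (w ++ p ++ y :: q) = profile (w ++ y :: v)) :
    Derivable basisJ2 (w ++ p ++ y :: q) (w ++ y :: (p ++ q)) := by
  induction p using List.reverseRecOn generalizing q with
  | nil => simpa using Derivable.refl _
  | append_singleton p z ih =>
    have hzy : z ≠ y := fun hzy => hyp (by simp [hzy])
    have hyp' : y ∉ p := fun hy => hyp (by simp [hy])
    simp only [List.append_assoc, List.singleton_append] at hu h ⊢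
    rw [← List.append_assoc] at hu h ⊢
    have hswap : Derivable basisJ2 (w ++ p ++ z :: y :: q) (w ++ p ++ y :: z :: q) := by
      rcases mem_suffix_or_mem_prefix_of_profile_eq hzy hyp' hu hv h with ⟨hz, hy⟩ | ⟨hz, hy⟩
      · exact derivable_swap_of_mem_right (by simp [basisJ2]) hzy hz hy
      · exact derivable_swap_of_mem_left (by simp [basisJ2]) hzy hz hy
    have hmove := ih (q := z :: q) hyp' (hu.of_perm ((List.Perm.swap y z q).append_left _))
      ((profile_eq_of_derivable hswap).symm.trans h)
    simpa using hswap.trans hmove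

theorem derivable_of_profile_eq_of_atMostTwice {w u v : Wd} (hu : AtMostTwice (w ++ u))
    (hv : AtMostTwice (w ++ v)) (h : profile (w ++ u) = profile (w ++ v)) :
    Derivable basisJ2 (w ++ u) (w ++ v) := by
  induction v generalizing w u with
  | nil =>
    obtain rfl : u = [] := List.eq_nil_iff_forall_not_mem.2 fun a ha => by
      have := count_eq_of_profile_eq hu hv h a
      simp only [List.append_nil, List.count_append, Nat.add_eq_left] at this
      exact (List.count_pos_iff.2 ha).ne' this
    rfl
  | cons y v ih =>
    have hyu : y ∈ u := by
      have := count_eq_of_profile_eq hu hv h y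
      simp only [List.count_append, List.count_cons_self, Nat.add_left_cancel_iff] at this
      exact List.count_pos_iff.1 (by omega)
    obtain ⟨p, q, rfl, hyp⟩ := List.eq_append_cons_of_mem hyu
    rw [← List.append_assoc] at hu h ⊢
    have hmove := derivable_move_to_front hyp hu hv h
    have hu' : AtMostTwice (w ++ y :: (p ++ q)) :=
      hu.of_perm (by rw [List.append_assoc]; exact List.perm_middle.append_left w)
    have hrest := ih (w := w ++ [y]) (u := p ++ q) (by simpa using hu') (by simpa using hv)
      (by simpa using (profile_eq_of_derivable hmove).symm.trans h)
    simpa using hmove.trans (by simpa using hrest)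

theorem derivable_of_mem_Jm_two {e : Wd × Wd} (he : e ∈ Jm 2) : Derivable basisJ2 e.1 e.2 := by
  have hx : xtxtx ∈ basisJ2 := by simp [basisJ2]
  obtain ⟨u, hu, hu₂⟩ := exists_derivable_atMostTwice hx e.1
  obtain ⟨v, hv, hv₂⟩ := exists_derivable_atMostTwice hx e.2
  have h : profile u = profile v := by
    rw [← profile_eq_of_derivable hu, ← profile_eq_of_derivable hv]
    exact mem_Jm_two_iff.1 he
  exact hu.trans ((derivable_of_profile_eq_of_atMostTwice (w := []) hu₂ hv₂ h).trans hv.symm)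

theorem stmt9 (e : Wd × Wd) :
    e ∈ Jm 2 ↔ Consequence (delta {sigma1, sigma2, xtxtx}) e := by
  rw [consequence_delta_iff]
  exact ⟨fun he => (derivable_of_mem_Jm_two he).consequence,
    mem_Jm_two_of_consequence basisJ2_subset_Jm_two⟩
end
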